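/- Bounded-height refinement corollary: assuming ⟦A_max⟧ ≤ ⟦A_min⟧, there exists a computable k ∈ ℕ such that for every P ∈ Reachable (i.e., P = Prod(d) for some context d) and every term s, there exists a term t of height at most k and a real x such that t refines s for P with shift x. -/

import Mathlib

/-- A ranked alphabet: symbols with arities. -/
structure RankedAlphabet where
  symb : Type
  ar : symb → ℕ

/-- Terms (finite ranked trees) over a ranked alphabet. -/
inductive Term (A : RankedAlphabet) : Type where
  | node (a : A.symb) (ts : Fin (A.ar a) → Term A) : Term A

/-- Height of a term: length of the longest branch. -/
def Term.height {A : RankedAlphabet} : Term A → ℕ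
  | .node _ ts => Finset.univ.sup fun i => (ts i).height + 1

/-- Size of a term: number of nodes. -/
def Term.size {A : RankedAlphabet} : Term A → ℕ
  | .node _ ts => 1 + ∑ i, (ts i).size

/-- A nondeterministic tree automaton with real weights on transitions and final states. -/
structure WTA (A : RankedAlphabet) (Q : Type) where
  trans : (a : A.symb) → (Fin (A.ar a) → Q) → Q → Prop
  wt : (a : A.symb) → (Fin (A.ar a) → Q) → Q → ℝ
  final : Q → Prop
  fwt : Q → ℝ

/-- Runs of an automaton over a term, reaching a given state at the root. -/
inductive RunOf {A : RankedAlphabet} {Q : Type} (M : WTA A Q) : Term A → Q → Type where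
  | node (a : A.symb) (ts : Fin (A.ar a) → Term A) (qs : Fin (A.ar a) → Q) (q : Q)
      (hq : M.trans a qs q) (rs : ∀ i, RunOf M (ts i) (qs i)) : RunOf M (.node a ts) q

/-- The weight of a run: sum of the weights of the transitions used. -/
def RunOf.wt {A : RankedAlphabet} {Q : Type} {M : WTA A Q} :
    {t : Term A} → {q : Q} → RunOf M t q → ℝ
  | _, _, .node a _ qs q _ rs => (∑ i, (rs i).wt) + M.wt a qs q

/-- Contexts: terms with exactly one hole. -/
inductive Ctx (A : RankedAlphabet) : Type where
  | hole : Ctx A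
  | node (a : A.symb) (i : Fin (A.ar a)) (c : Ctx A) (ts : Fin (A.ar a) → Term A) : Ctx A

/-- Plugging a term into the hole of a context. -/
def Ctx.plug {A : RankedAlphabet} : Ctx A → Term A → Term A
  | .hole, t => t
  | .node a i c ts, t => .node a (Function.update ts i (c.plug t))

/-- Composition of contexts: plugging the second context into the hole of the first. -/
def Ctx.comp {A : RankedAlphabet} : Ctx A → Ctx A → Ctx A
  | .hole, d => d
  | .node a i c ts, d => .node a i (c.comp d) ts

/-- Iterated composition of a context with itself. -/
def Ctx.pow {A : RankedAlphabet} (m : Ctx A) : ℕ → Ctx A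
  | 0 => .hole
  | n + 1 => m.comp (m.pow n)

/-- Runs over a context, from a state (at the hole) to a state (at the root). -/
inductive CRun {A : RankedAlphabet} {Q : Type} (M : WTA A Q) : Ctx A → Q → Q → Type where
  | hole (p : Q) : CRun M .hole p p
  | node (a : A.symb) (i : Fin (A.ar a)) (c : Ctx A) (ts : Fin (A.ar a) → Term A)
      (qs : Fin (A.ar a) → Q) (p q : Q)
      (hq : M.trans a qs q)
      (hc : CRun M c p (qs i))
      (rs : ∀ j, j ≠ i → RunOf M (ts j) (qs j)) : CRun M (.node a i c ts) p q

/-- The weight of a run over a context. -/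
def CRun.wt {A : RankedAlphabet} {Q : Type} {M : WTA A Q} :
    {c : Ctx A} → {p q : Q} → CRun M c p q → ℝ
  | _, _, _, .hole _ => 0
  | _, _, _, .node a i _ _ qs _ q _ hc rs =>
      (∑ j : {j // j ≠ i}, (rs j.1 j.2).wt) + M.wt a qs q + hc.wt

/-- Gluing a run over a context with a run over a term yields a run over the plugged term. -/
def CRun.glue {A : RankedAlphabet} {Q : Type} {M : WTA A Q} {t : Term A} :
    {c : Ctx A} → {p q : Q} → CRun M c p q → RunOf M t p → RunOf M (c.plug t) q
  | _, _, _, .hole _, r => r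
  | _, _, _, .node a i c ts qs _ q hq hc rs, r =>
      .node a (Function.update ts i (c.plug t)) qs q hq
        (fun j =>
          if h : j = i then
            cast (by subst h; rw [Function.update_self]) (CRun.glue hc r)
          else
            cast (congrArg (fun s => RunOf M s (qs j))
              (Function.update_of_ne h (c.plug t) ts).symm) (rs j h))

/-- Gluing runs over composed contexts. -/
def CRun.cglue {A : RankedAlphabet} {Q : Type} {M : WTA A Q} {d : Ctx A} {p : Q} :
    {c : Ctx A} → {q r : Q} → CRun M c q r → CRun M d p q → CRun M (c.comp d) p r
  | _, _, _, .hole _, rd => rd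
  | _, _, _, .node a i c ts qs _ r hq hc rs, rd =>
      .node a i (c.comp d) ts qs p r hq (hc.cglue rd) rs

/-- The `n`-fold iteration of a loop run over a context. -/
def CRun.pow {A : RankedAlphabet} {Q : Type} {M : WTA A Q} {m : Ctx A} {q : Q}
    (σ : CRun M m q q) : (n : ℕ) → CRun M (m.pow n) q q
  | 0 => .hole q
  | n + 1 => σ.cglue (σ.pow n)

/-- `x` is the weight of some accepting run of `M` over `t`
(weight of the run plus the final-state weight). -/
def AccWeight {A : RankedAlphabet} {Q : Type} (M : WTA A Q) (t : Term A) (x : ℝ) : Prop :=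
  ∃ (q : Q) (r : RunOf M t q), M.final q ∧ r.wt + M.fwt q = x

/-- `M` has some accepting run over `t`. -/
def HasAcc {A : RankedAlphabet} {Q : Type} (M : WTA A Q) (t : Term A) : Prop :=
  ∃ x, AccWeight M t x

/-- `f` is the max-plus semantics of `M`: `f t = ⊥` iff there is no accepting run,
and otherwise `f t` is the maximum weight of an accepting run. -/
def ComputesMax {A : RankedAlphabet} {Q : Type} (M : WTA A Q) (f : Term A → Option ℝ) : Prop :=
  ∀ t, (f t = none ↔ ¬ HasAcc M t) ∧
    ∀ x, f t = some x → AccWeight M t x ∧ ∀ y, AccWeight M t y → y ≤ x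

/-- `f` is the min-plus semantics of `M`. -/
def ComputesMin {A : RankedAlphabet} {Q : Type} (M : WTA A Q) (f : Term A → Option ℝ) : Prop :=
  ∀ t, (f t = none ↔ ¬ HasAcc M t) ∧
    ∀ x, f t = some x → AccWeight M t x ∧ ∀ y, AccWeight M t y → x ≤ y

/-- An automaton is unambiguous if every term has at most one accepting run. -/
def Unambiguous {A : RankedAlphabet} {Q : Type} (M : WTA A Q) : Prop :=
  ∀ (t : Term A) (q q' : Q) (r : RunOf M t q) (r' : RunOf M t q'),
    M.final q → M.final q' → q = q' ∧ HEq r r'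

/-- The order on `ℝ ∪ {⊥}` in which `⊥` is comparable only with itself. -/
def OLe : Option ℝ → Option ℝ → Prop
  | none, none => True
  | some x, some y => x ≤ y
  | _, _ => False

/-- Shifting a value of `ℝ ∪ {⊥}` by a real number. -/
def oshift (u : Option ℝ) (x : ℝ) : Option ℝ := u.map (· + x)

/-- The set of states reachable at the root by some run over `t`. -/
def reachSet {A : RankedAlphabet} {Q : Type} (M : WTA A Q) (t : Term A) : Set Q :=
  {q | Nonempty (RunOf M t q)}

/-- The set of states at the hole from which there is an accepting run over the context `c`. -/
def prodSet {A : RankedAlphabet} {Q : Type} (M : WTA A Q) (c : Ctx A) : Set Q :=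
  {p | ∃ q, M.final q ∧ Nonempty (CRun M c p q)}

section Bi
variable {A : RankedAlphabet} {Q1 Q2 : Type} (M1 : WTA A Q1) (M2 : WTA A Q2)

/-- Reachable states of the disjoint union of the two automata. -/
def biReach (t : Term A) : Set (Q1 ⊕ Q2) :=
  Sum.inl '' reachSet M1 t ∪ Sum.inr '' reachSet M2 t

/-- Productive states of the disjoint union of the two automata. -/
def biProd (c : Ctx A) : Set (Q1 ⊕ Q2) :=
  Sum.inl '' prodSet M1 c ∪ Sum.inr '' prodSet M2 c

/-- Final states of the disjoint union of the two automata. -/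
def biFinal : Set (Q1 ⊕ Q2) :=
  Sum.inl '' {q | M1.final q} ∪ Sum.inr '' {q | M2.final q}

/-- Transition relation of the disjoint union of the two automata. -/
def biTrans (a : A.symb) (qs : Fin (A.ar a) → Q1 ⊕ Q2) (q : Q1 ⊕ Q2) : Prop :=
  (∃ (qs' : Fin (A.ar a) → Q1) (q' : Q1),
      qs = Sum.inl ∘ qs' ∧ q = Sum.inl q' ∧ M1.trans a qs' q') ∨
  (∃ (qs' : Fin (A.ar a) → Q2) (q' : Q2),
      qs = Sum.inr ∘ qs' ∧ q = Sum.inr q' ∧ M2.trans a qs' q')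

/-- The family `Reachable` of sets of states of the form `Reach(t)`. -/
def ReachableSets : Set (Set (Q1 ⊕ Q2)) := {S | ∃ t, biReach M1 M2 t = S}

/-- The family `Productive` of sets of states of the form `Prod(c)`. -/
def ProductiveSets : Set (Set (Q1 ⊕ Q2)) := {S | ∃ c, biProd M1 M2 c = S}

/-- `t` refines `s` for `P` with shift `x`. -/
def Refines (P : Set (Q1 ⊕ Q2)) (t s : Term A) (x : ℝ) : Prop :=
  biReach M1 M2 s = biReach M1 M2 t ∧
  (∀ p : Q1, Sum.inl p ∈ P → ∀ ρ : RunOf M1 s p, ∃ ρ' : RunOf M1 t p, ρ.wt ≤ ρ'.wt + x) ∧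
  (∀ q : Q2, Sum.inr q ∈ P → ∀ τ : RunOf M2 s q, ∃ τ' : RunOf M2 t q, τ'.wt + x ≤ τ.wt)

end Bi

/-- Transitions of the product automaton `A_pro`, relative to a transition relation `Δ`. -/
def ProTrans {A : RankedAlphabet} {Q : Type}
    (Δ : ∀ a : A.symb, (Fin (A.ar a) → Q) → Q → Prop) (a : A.symb)
    (RPs : Fin (A.ar a) → Set Q × Set Q) (RP : Set Q × Set Q) : Prop :=
  RP.1 = {r | ∃ rs, Δ a rs r ∧ ∀ j, rs j ∈ (RPs j).1} ∧
  ∀ i, (RPs i).2 =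
    {ri | ∃ rs p, Δ a rs p ∧ rs i = ri ∧ (∀ j, j ≠ i → rs j ∈ (RPs j).1) ∧ p ∈ RP.2}

/-!
Follow a longest branch of `s` and annotate each level with the reachable states of the subterm
there and with the states visited by fixed maximal `Mmax`-runs and minimal `Mmin`-runs on `s`.
Beyond `heightBound` levels two annotations coincide, so the context between the two levels is a
loop for all these runs at once. Pumping that loop inside the productive context `d` and using
`⟦Mmax⟧ ≤ ⟦Mmin⟧` shows that every max-loop weighs at most every min-loop; cutting the
loop out therefore gives a smaller term refining `s`, with any shift between these weights.
Iterating on the size of the term bounds the height.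
-/

lemma le_of_forall_add_nat_mul_le {α : Type*} [Field α] [LinearOrder α] [IsStrictOrderedRing α]
    [Archimedean α] {a b δ ε : α} (h : ∀ n : ℕ, a + n * δ ≤ b + n * ε) : δ ≤ ε := by
  by_contra! hlt
  obtain ⟨n, hn⟩ := exists_nat_gt ((b - a) / (δ - ε))
  rw [div_lt_iff₀ (sub_pos.mpr hlt)] at hn
  linarith [h n]

lemma exists_between_of_forall_le_of_finite {α ι κ : Type*} [ConditionallyCompleteLattice α]
    [Finite ι] [Finite κ] {a : ι → α} {b : κ → α} (h : ∀ i k, a i ≤ b k) :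
    ∃ x, (∀ i, a i ≤ x) ∧ ∀ k, x ≤ b k := by
  rcases isEmpty_or_nonempty ι with hι | hι
  · exact ⟨⨅ k, b k, isEmptyElim, fun k => ciInf_le (Set.finite_range b).bddBelow k⟩
  · exact ⟨⨆ i, a i, fun i => le_ciSup (Set.finite_range a).bddAbove i,
      fun k => ciSup_le (h · k)⟩

lemma exists_lt_le_map_eq_of_card_lt {α : Type*} [Finite α] (f : ℕ → α) {n : ℕ}
    (h : Nat.card α < n) : ∃ i j, i < j ∧ j ≤ n ∧ f i = f j := by
  have := Fintype.ofFinite α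
  obtain ⟨a, b, hne, hab⟩ := Fintype.exists_ne_map_eq_of_card_lt (fun m : Fin (n + 1) => f m)
    (by rw [Fintype.card_fin, ← Nat.card_eq_fintype_card]; omega)
  rcases Fin.lt_or_lt_of_ne hne with hlt | hlt
  · exact ⟨a, b, hlt, b.is_le, hab⟩
  · exact ⟨b, a, hlt, a.is_le, hab.symm⟩

section Runs

variable {A : RankedAlphabet} {Q : Type} {M : WTA A Q}

lemma RunOf.wt_cast {t t' : Term A} {q : Q} (h : t = t') (r : RunOf M t q) :
    (cast (congrArg (RunOf M · q) h) r).wt = r.wt := by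
  subst h; rfl

lemma CRun.wt_glue {c : Ctx A} {p q : Q} (κ : CRun M c p q) {t : Term A} (r : RunOf M t p) :
    (κ.glue r).wt = κ.wt + r.wt := by
  induction κ with
  | hole => exact (zero_add _).symm
  | node a i c ts qs p q hq hc rs ih =>
    change (∑ j, _) + M.wt a qs q = _
    rw [Fintype.sum_eq_add_sum_subtype_ne _ i]
    beta_reduce
    rw [dif_pos rfl, RunOf.wt_cast (Function.update_self i (c.plug t) ts).symm, ih,
      Finset.sum_congr rfl fun j _ => by
        rw [dif_neg j.2, RunOf.wt_cast (Function.update_of_ne j.2 _ ts).symm], CRun.wt]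
    ring

lemma CRun.wt_cglue {c d : Ctx A} {p q r : Q} (κ : CRun M c q r) (κ' : CRun M d p q) :
    (κ.cglue κ').wt = κ.wt + κ'.wt := by
  induction κ with
  | hole => exact (zero_add _).symm
  | node a i c ts qs _ r hq hc rs ih => simp only [CRun.cglue, CRun.wt, ih]; ring

lemma CRun.wt_pow {m : Ctx A} {q : Q} (σ : CRun M m q q) (n : ℕ) :
    (σ.pow n).wt = n * σ.wt := by
  induction n with
  | zero => simp [CRun.pow, CRun.wt]
  | succ n ih =>
    change (σ.cglue (σ.pow n)).wt = _
    rw [CRun.wt_cglue, ih]; push_cast; ring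

lemma Ctx.plug_comp (c d : Ctx A) (v : Term A) : (c.comp d).plug v = c.plug (d.plug v) := by
  induction c with
  | hole => rfl
  | node a i c ts ih => simp only [Ctx.comp, Ctx.plug, ih]

lemma RunOf.exists_split (c : Ctx A) (v : Term A) {u : Term A} (h : c.plug v = u) {q : Q}
    (ρ : RunOf M u q) :
    ∃ (p : Q) (κ : CRun M c p q) (rv : RunOf M v p), ρ.wt = κ.wt + rv.wt := by
  subst h
  induction c generalizing q with
  | hole => exact ⟨q, .hole q, ρ, (zero_add _).symm⟩
  | node a i c ts ih =>
    obtain ⟨_, _, qs, _, hq, rs⟩ := ρ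
    obtain ⟨p, κ, rv, hw⟩ :=
      ih (cast (congrArg (RunOf M · (qs i)) (Function.update_self i (c.plug v) ts)) (rs i))
    refine ⟨p, .node a i c ts qs p q hq κ
      (fun j hj => cast (congrArg (RunOf M · (qs j)) (Function.update_of_ne hj _ ts)) (rs j)),
      rv, ?_⟩
    rw [RunOf.wt_cast (Function.update_self i (c.plug v) ts)] at hw
    simp only [RunOf.wt, CRun.wt]
    rw [Fintype.sum_eq_add_sum_subtype_ne _ i, hw,
      Fintype.sum_congr _ _ fun j : {j // j ≠ i} =>
        RunOf.wt_cast (Function.update_of_ne j.2 _ ts) (rs j)]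
    ring

end Runs

section Terms
variable {A : RankedAlphabet} {Q : Type} {M : WTA A Q}

lemma mem_reachSet_node {a : A.symb} {ts : Fin (A.ar a) → Term A} {q : Q} :
    q ∈ reachSet M (.node a ts) ↔
      ∃ qs, M.trans a qs q ∧ ∀ j, qs j ∈ reachSet M (ts j) :=
  ⟨fun ⟨.node _ _ qs _ hq rs⟩ => ⟨qs, hq, fun j => ⟨rs j⟩⟩,
    fun ⟨qs, hq, hr⟩ => ⟨.node a ts qs q hq fun j => (hr j).some⟩⟩

lemma reachSet_plug_congr (c : Ctx A) {v w : Term A} (h : reachSet M v = reachSet M w) :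
    reachSet M (c.plug v) = reachSet M (c.plug w) := by
  induction c with
  | hole => exact h
  | node a i c ts ih =>
    ext q
    simp only [Ctx.plug, mem_reachSet_node]
    refine exists_congr fun qs => and_congr_right fun _ => forall_congr' fun j => ?_
    rcases eq_or_ne j i with rfl | hj
    · simp only [Function.update_self, ih]
    · simp only [Function.update_of_ne hj]

lemma biReach_plug_congr {Q' : Type} {M' : WTA A Q'} (c : Ctx A) {v w : Term A}
    (h : biReach M M' v = biReach M M' w) : biReach M M' (c.plug v) = biReach M M' (c.plug w) := by
  have h₁ : reachSet M v = reachSet M w := by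
    simpa [biReach, Set.preimage_image_eq _ Sum.inl_injective] using congrArg (Sum.inl ⁻¹' ·) h
  have h₂ : reachSet M' v = reachSet M' w := by
    simpa [biReach, Set.preimage_image_eq _ Sum.inr_injective] using congrArg (Sum.inr ⁻¹' ·) h
  simp only [biReach, reachSet_plug_congr c h₁, reachSet_plug_congr c h₂]

lemma Term.size_plug_lt (c : Ctx A) {v w : Term A} (h : v.size < w.size) :
    (c.plug v).size < (c.plug w).size := by
  induction c with
  | hole => exact h
  | node a i c ts ih =>
    simp only [Ctx.plug, Term.size, Fintype.sum_eq_add_sum_subtype_ne _ i, Function.update_self]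
    have hrest (u : Term A) : ∑ j : {j // j ≠ i}, (Function.update ts i u j).size =
        ∑ j : {j // j ≠ i}, (ts j).size :=
      Fintype.sum_congr _ _ fun j => by rw [Function.update_of_ne j.2]
    rw [hrest, hrest]
    omega

instance RunOf.finite [Finite Q] (t : Term A) (q : Q) : Finite (RunOf M t q) := by
  induction t generalizing q with
  | node a ts ih =>
    refine Finite.of_injective (β := Σ qs : Fin (A.ar a) → Q, ∀ i, RunOf M (ts i) (qs i))
      (fun ⟨_, _, qs, _, _, rs⟩ => ⟨qs, rs⟩) ?_
    rintro ⟨⟩ ⟨⟩ h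
    cases h
    rfl

end Terms

section Spine
variable {A : RankedAlphabet}

lemma Term.size_lt_node {a : A.symb} (ts : Fin (A.ar a) → Term A) (i : Fin (A.ar a)) :
    (ts i).size < (Term.node a ts).size :=
  Nat.lt_one_add_iff.mpr <| Finset.single_le_sum (f := fun j => (ts j).size)
    (fun _ _ => Nat.zero_le _) (Finset.mem_univ i)

lemma Term.exists_spine (s : Term A) :
    ∃ (sub : ℕ → Term A) (step : ℕ → Ctx A), sub 0 = s ∧
      (∀ l, (step l).plug (sub (l + 1)) = sub l) ∧
      StrictAntiOn (fun l => (sub l).size) (Set.Iic s.height) := by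
  induction s with
  | node a ts ih =>
    rcases (Finset.univ : Finset (Fin (A.ar a))).eq_empty_or_nonempty with hleaf | hne
    · have h0 : (Term.node a ts).height = 0 := by simp [Term.height, hleaf]
      exact ⟨fun _ => .node a ts, fun _ => .hole, rfl, fun _ => rfl,
        strictAntiOn_Iic_of_succ_lt fun m hm => by omega⟩
    obtain ⟨i, -, hi⟩ := Finset.exists_mem_eq_sup _ hne fun i => (ts i).height + 1
    obtain ⟨sub, step, h0, hstep, hanti⟩ := ih i
    refine ⟨fun | 0 => .node a ts | l + 1 => sub l,
      fun | 0 => .node a i .hole ts | l + 1 => step l, rfl, ?_, ?_⟩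
    · rintro (_ | l)
      · simp [Ctx.plug, h0]
      · exact hstep l
    · have hheight : (Term.node a ts).height = (ts i).height + 1 := hi
      refine strictAntiOn_Iic_of_succ_lt fun m hm => ?_
      rcases m with _ | m
      · simpa [h0] using Term.size_lt_node ts i
      · exact hanti (Set.mem_Iic.mpr (by omega)) (Set.mem_Iic.mpr (by omega)) (Nat.lt_succ_self m)

end Spine

section RunsAlongSpine
variable {A : RankedAlphabet} {Q : Type} {M : WTA A Q}
  {sub : ℕ → Term A} {step : ℕ → Ctx A}

def spineCtx (step : ℕ → Ctx A) (i : ℕ) : ℕ → Ctx A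
  | 0 => .hole
  | k + 1 => (step i).comp (spineCtx step (i + 1) k)

lemma spineCtx_plug (hstep : ∀ l, (step l).plug (sub (l + 1)) = sub l) (k i : ℕ) :
    (spineCtx step i k).plug (sub (i + k)) = sub i := by
  induction k generalizing i with
  | zero => rfl
  | succ k ih => rw [spineCtx, Ctx.plug_comp, show i + (k + 1) = i + 1 + k by omega, ih, hstep]

lemma exists_cRun_spineCtx (r : ∀ l, Σ q, RunOf M (sub l) q)
    (hr : ∀ l, ∃ κ : CRun M (step l) (r (l + 1)).1 (r l).1,
      (r l).2.wt = κ.wt + (r (l + 1)).2.wt)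
    (k i j : ℕ) (hj : i + k = j) :
    ∃ κ : CRun M (spineCtx step i k) (r j).1 (r i).1, (r i).2.wt = κ.wt + (r j).2.wt := by
  induction k generalizing i with
  | zero => subst hj; exact ⟨.hole _, (zero_add _).symm⟩
  | succ k ih =>
    obtain ⟨κ, hκ⟩ := hr i
    obtain ⟨κ', hκ'⟩ := ih (i + 1) (by omega)
    refine ⟨κ.cglue κ', ?_⟩
    change _ = CRun.wt (c := (step i).comp (spineCtx step (i + 1) k)) (κ.cglue κ') + _
    rw [CRun.wt_cglue, hκ, hκ', add_assoc]

lemma exists_loop_of_spine (hstep : ∀ l, (step l).plug (sub (l + 1)) = sub l) {p : Q}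
    (ρ : RunOf M (sub 0) p) : ∃ st : ℕ → Q, ∀ i k, st i = st (i + k) →
      ∃ (σ : Q) (κC : CRun M (spineCtx step 0 i) σ p) (κg : CRun M (spineCtx step i k) σ σ)
        (rv : RunOf M (sub (i + k)) σ), ρ.wt = κC.wt + κg.wt + rv.wt := by
  choose nq nκ nrv hn using fun l (x : Σ q, RunOf M (sub l) q) =>
    RunOf.exists_split (step l) (sub (l + 1)) (hstep l) x.2
  -- `r l` is the part of `ρ` below level `l`, split off one step at a time.
  let r : ∀ l, Σ q, RunOf M (sub l) q :=
    fun l => Nat.rec ⟨p, ρ⟩ (fun l x => ⟨nq l x, nrv l x⟩) l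
  have hr := exists_cRun_spineCtx r fun l => ⟨nκ l (r l), hn l (r l)⟩
  refine ⟨fun l => (r l).1, fun i k (hik : (r i).1 = (r (i + k)).1) => ?_⟩
  obtain ⟨κC, hC⟩ := hr i 0 i (zero_add i)
  obtain ⟨κg, hg⟩ := hr k i (i + k) rfl
  generalize r (i + k) = y at hik κg hg
  obtain ⟨σ, rv⟩ := y
  dsimp only at hik
  subst hik
  exact ⟨_, κC, κg, rv, hC.trans (by rw [hg, add_assoc])⟩

lemma exists_maxLoop_of_spine [Finite Q] (hstep : ∀ l, (step l).plug (sub (l + 1)) = sub l)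
    (p : Q) :
    ∃ st : ℕ → Q, ∀ i k, st i = st (i + k) → Nonempty (RunOf M (sub 0) p) →
      ∃ (σ : Q) (κC : CRun M (spineCtx step 0 i) σ p) (κg : CRun M (spineCtx step i k) σ σ)
        (rv : RunOf M (sub (i + k)) σ),
        ∀ ρ : RunOf M (sub 0) p, ρ.wt ≤ κC.wt + κg.wt + rv.wt := by
  rcases isEmpty_or_nonempty (RunOf M (sub 0) p) with h | h
  · exact ⟨fun _ => p, fun _ _ _ ⟨ρ⟩ => isEmptyElim ρ⟩
  obtain ⟨ρ₀, hρ₀⟩ := Finite.exists_max (RunOf.wt (M := M) (t := sub 0) (q := p))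
  obtain ⟨st, hst⟩ := exists_loop_of_spine hstep ρ₀
  refine ⟨st, fun i k hik _ => ?_⟩
  obtain ⟨σ, κC, κg, rv, hw⟩ := hst i k hik
  exact ⟨σ, κC, κg, rv, fun ρ => hw ▸ hρ₀ ρ⟩

lemma exists_minLoop_of_spine [Finite Q] (hstep : ∀ l, (step l).plug (sub (l + 1)) = sub l)
    (q : Q) :
    ∃ st : ℕ → Q, ∀ i k, st i = st (i + k) → Nonempty (RunOf M (sub 0) q) →
      ∃ (θ : Q) (τC : CRun M (spineCtx step 0 i) θ q) (τg : CRun M (spineCtx step i k) θ θ)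
        (τv : RunOf M (sub (i + k)) θ),
        ∀ τ : RunOf M (sub 0) q, τC.wt + τg.wt + τv.wt ≤ τ.wt := by
  rcases isEmpty_or_nonempty (RunOf M (sub 0) q) with h | h
  · exact ⟨fun _ => q, fun _ _ _ ⟨τ⟩ => isEmptyElim τ⟩
  obtain ⟨τ₀, hτ₀⟩ := Finite.exists_min (RunOf.wt (M := M) (t := sub 0) (q := q))
  obtain ⟨st, hst⟩ := exists_loop_of_spine hstep τ₀
  refine ⟨st, fun i k hik _ => ?_⟩
  obtain ⟨θ, τC, τg, τv, hw⟩ := hst i k hik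
  exact ⟨θ, τC, τg, τv, fun τ => hw ▸ hτ₀ τ⟩

end RunsAlongSpine

section Refinement
variable {A : RankedAlphabet} {Q1 Q2 : Type} {M1 : WTA A Q1} {M2 : WTA A Q2}
  {P : Set (Q1 ⊕ Q2)}

lemma Refines.refl (s : Term A) : Refines M1 M2 P s s 0 :=
  ⟨rfl, fun _ _ ρ => ⟨ρ, (add_zero _).ge⟩, fun _ _ τ => ⟨τ, (add_zero _).le⟩⟩

lemma Refines.trans {t u s : Term A} {x y : ℝ} (htu : Refines M1 M2 P t u x)
    (hus : Refines M1 M2 P u s y) : Refines M1 M2 P t s (x + y) := by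
  obtain ⟨hr₁, hmax₁, hmin₁⟩ := htu
  obtain ⟨hr₂, hmax₂, hmin₂⟩ := hus
  refine ⟨hr₂.trans hr₁, fun p hp ρ => ?_, fun q hq τ => ?_⟩
  · obtain ⟨ρ', hρ'⟩ := hmax₂ p hp ρ
    obtain ⟨ρ'', hρ''⟩ := hmax₁ p hp ρ'
    exact ⟨ρ'', by linarith⟩
  · obtain ⟨τ', hτ'⟩ := hmin₂ q hq τ
    obtain ⟨τ'', hτ''⟩ := hmin₁ q hq τ'
    exact ⟨τ'', by linarith⟩

lemma inl_mem_biProd {c : Ctx A} {p : Q1} :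
    Sum.inl p ∈ biProd M1 M2 c ↔ p ∈ prodSet M1 c := by
  simp [biProd]

lemma inr_mem_biProd {c : Ctx A} {q : Q2} :
    Sum.inr q ∈ biProd M1 M2 c ↔ q ∈ prodSet M2 c := by
  simp [biProd]

end Refinement

section Pumping
variable {A : RankedAlphabet} {Q1 Q2 : Type} {Mmax : WTA A Q1} {Mmin : WTA A Q2}

lemma accWeight_le_of_computes {f g : Term A → Option ℝ} (hf : ComputesMax Mmax f)
    (hg : ComputesMin Mmin g) (hle : ∀ t, OLe (f t) (g t)) (X : Term A) (x y : ℝ)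
    (hx : AccWeight Mmax X x) (hy : AccWeight Mmin X y) : x ≤ y := by
  obtain ⟨xf, hxf⟩ := Option.ne_none_iff_exists'.mp fun h => (hf X).1.mp h ⟨x, hx⟩
  obtain ⟨xg, hxg⟩ := Option.ne_none_iff_exists'.mp fun h => (hg X).1.mp h ⟨y, hy⟩
  have hfg : OLe (some xf) (some xg) := hxf ▸ hxg ▸ hle X
  exact (((hf X).2 xf hxf).2 x hx).trans (hfg.trans (((hg X).2 xg hxg).2 y hy))

lemma accWeight_plug_pow {Q : Type} {M : WTA A Q} {c g : Ctx A} {v : Term A} {σ φ : Q}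
    (κ : CRun M c σ φ) (hφ : M.final φ) (κg : CRun M g σ σ) (rv : RunOf M v σ) (n : ℕ) :
    AccWeight M (c.plug ((g.pow n).plug v)) (κ.wt + rv.wt + M.fwt φ + n * κg.wt) :=
  ⟨φ, κ.glue ((κg.pow n).glue rv), hφ, by
    rw [CRun.wt_glue, CRun.wt_glue, CRun.wt_pow]; ring⟩

lemma CRun.wt_le_of_loops (hsep : ∀ X x y, AccWeight Mmax X x → AccWeight Mmin X y → x ≤ y)
    {c g : Ctx A} {v : Term A} {σ φ : Q1} {θ ψ : Q2}
    (κ : CRun Mmax c σ φ) (hφ : Mmax.final φ) (κg : CRun Mmax g σ σ) (rv : RunOf Mmax v σ)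
    (τ : CRun Mmin c θ ψ) (hψ : Mmin.final ψ) (τg : CRun Mmin g θ θ)
    (τv : RunOf Mmin v θ) : κg.wt ≤ τg.wt :=
  le_of_forall_add_nat_mul_le fun n =>
    hsep _ _ _ (accWeight_plug_pow κ hφ κg rv n) (accWeight_plug_pow τ hψ τg τv n)

lemma Refines.of_cut_loop {P : Set (Q1 ⊕ Q2)} {C g : Ctx A} {v u : Term A} {x : ℝ}
    (hu : C.plug (g.plug v) = u) (hreach : biReach Mmax Mmin (g.plug v) = biReach Mmax Mmin v)
    (hmax : ∀ p, Sum.inl p ∈ P → Nonempty (RunOf Mmax u p) →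
      ∃ (σ : Q1) (κC : CRun Mmax C σ p) (κg : CRun Mmax g σ σ) (rv : RunOf Mmax v σ),
        κg.wt ≤ x ∧ ∀ ρ : RunOf Mmax u p, ρ.wt ≤ κC.wt + κg.wt + rv.wt)
    (hmin : ∀ q, Sum.inr q ∈ P → Nonempty (RunOf Mmin u q) →
      ∃ (θ : Q2) (τC : CRun Mmin C θ q) (τg : CRun Mmin g θ θ) (τv : RunOf Mmin v θ),
        x ≤ τg.wt ∧ ∀ τ : RunOf Mmin u q, τC.wt + τg.wt + τv.wt ≤ τ.wt) :
    Refines Mmax Mmin P (C.plug v) u x := by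
  subst hu
  refine ⟨biReach_plug_congr C hreach, fun p hp ρ => ?_, fun q hq τ => ?_⟩
  · obtain ⟨σ, κC, κg, rv, hx, hρ⟩ := hmax p hp ⟨ρ⟩
    exact ⟨κC.glue rv, by rw [CRun.wt_glue]; linarith [hρ ρ]⟩
  · obtain ⟨θ, τC, τg, τv, hx, hτ⟩ := hmin q hq ⟨τ⟩
    exact ⟨τC.glue τv, by rw [CRun.wt_glue]; linarith [hτ τ]⟩

end Pumping

noncomputable def heightBound (Q1 Q2 : Type) : ℕ :=
  Nat.card (Set (Q1 ⊕ Q2) × (Q1 → Q1) × (Q2 → Q2))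

section SizeReduction
variable {A : RankedAlphabet} {Q1 Q2 : Type} [Finite Q1] [Finite Q2]
  {Mmax : WTA A Q1} {Mmin : WTA A Q2}

theorem exists_refines_size_lt
    (hsep : ∀ X x y, AccWeight Mmax X x → AccWeight Mmin X y → x ≤ y) (d : Ctx A)
    {s : Term A} (hs : heightBound Q1 Q2 < s.height) :
    ∃ t x, t.size < s.size ∧ Refines Mmax Mmin (biProd Mmax Mmin d) t s x := by
  obtain ⟨sub, step, rfl, hstep, hanti⟩ := Term.exists_spine s
  choose stP hstP using exists_maxLoop_of_spine (M := Mmax) hstep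
  choose stQ hstQ using exists_minLoop_of_spine (M := Mmin) hstep
  obtain ⟨i, j, hij, hjs, heq⟩ := exists_lt_le_map_eq_of_card_lt
    (fun l => (biReach Mmax Mmin (sub l), fun p => stP p l, fun q => stQ q l)) hs
  obtain ⟨k, rfl⟩ := Nat.exists_eq_add_of_le hij.le
  simp only [Prod.mk.injEq, funext_iff] at heq
  obtain ⟨hreach, hP, hQ⟩ := heq
  set P := biProd Mmax Mmin d
  choose σ κC κg rv hw using
    fun p : {p : Q1 // Sum.inl p ∈ P ∧ Nonempty (RunOf Mmax (sub 0) p)} =>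
      hstP p.1 i k (hP p.1) p.2.2
  choose θ τC τg τv hw' using
    fun q : {q : Q2 // Sum.inr q ∈ P ∧ Nonempty (RunOf Mmin (sub 0) q)} =>
      hstQ q.1 i k (hQ q.1) q.2.2
  obtain ⟨x, hxP, hxQ⟩ := exists_between_of_forall_le_of_finite
    (a := fun p => (κg p).wt) (b := fun q => (τg q).wt) fun p q => by
      obtain ⟨φ, hφ, ⟨κd⟩⟩ := inl_mem_biProd.mp p.2.1
      obtain ⟨ψ, hψ, ⟨τd⟩⟩ := inr_mem_biProd.mp q.2.1
      exact CRun.wt_le_of_loops hsep (κd.cglue (κC p)) hφ (κg p) (rv p)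
        (τd.cglue (τC q)) hψ (τg q) (τv q)
  have hcut : (spineCtx step 0 i).plug ((spineCtx step i k).plug (sub (i + k))) = sub 0 := by
    simpa [spineCtx_plug hstep k i] using spineCtx_plug hstep i 0
  refine ⟨_, x, ?_, Refines.of_cut_loop hcut (by rwa [spineCtx_plug hstep k i])
    (fun p hp hne => ?_) fun q hq hne => ?_⟩
  · rw [← hcut, spineCtx_plug hstep k i]
    exact Term.size_plug_lt _ (hanti (Set.mem_Iic.mpr (by omega)) (Set.mem_Iic.mpr hjs) hij)
  · exact ⟨_, κC ⟨p, hp, hne⟩, κg _, rv _, hxP _, hw ⟨p, hp, hne⟩⟩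
  · exact ⟨_, τC ⟨q, hq, hne⟩, τg _, τv _, hxQ _, hw' ⟨q, hq, hne⟩⟩

theorem exists_refines_height_le
    (hsep : ∀ X x y, AccWeight Mmax X x → AccWeight Mmin X y → x ≤ y) (d : Ctx A)
    (s : Term A) :
    ∃ t x, t.height ≤ heightBound Q1 Q2 ∧ Refines Mmax Mmin (biProd Mmax Mmin d) t s x := by
  by_cases hs : s.height ≤ heightBound Q1 Q2
  · exact ⟨s, 0, hs, Refines.refl s⟩
  obtain ⟨t, x, hlt, hts⟩ := exists_refines_size_lt hsep d (not_le.mp hs)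
  obtain ⟨u, y, hu, hut⟩ := exists_refines_height_le hsep d t
  exact ⟨u, y + x, hu, hut.trans hts⟩
termination_by s.size

end SizeReduction

/-- bounded-height refinement corollary: assuming `⟦A_max⟧ ≤ ⟦A_min⟧`,
there is a `k ∈ ℕ` such that for every productive-set `P` and every term `s`, some term
`t` of height at most `k` refines `s` for `P` with some shift `x`. -/
theorem bounded_height_refinement {A : RankedAlphabet} {Q1 Q2 : Type}
    [Fintype Q1] [Fintype Q2] (Mmax : WTA A Q1) (Mmin : WTA A Q2)
    (f g : Term A → Option ℝ)
    (hf : ComputesMax Mmax f) (hg : ComputesMin Mmin g)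
    (hle : ∀ t, OLe (f t) (g t)) :
    ∃ k : ℕ, ∀ P ∈ ProductiveSets Mmax Mmin, ∀ s : Term A,
      ∃ (t : Term A) (x : ℝ), t.height ≤ k ∧ Refines Mmax Mmin P t s x := by
  refine ⟨heightBound Q1 Q2, ?_⟩
  rintro P ⟨d, rfl⟩ s
  exact exists_refines_height_le (accWeight_le_of_computes hf hg hle) d s
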